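/- arXiv:2003.12371 — 3 statements merged into one kernel-verified Lean document; each statement's English description precedes it below -/
import Mathlib

section
/- Let $\mathcal{P}$ be an orthogonal projection on a Hilbert space $\mathcal{H}$, $\mathcal{Q} = 1 - \mathcal{P}$, and let $v \geq 0$ be a bounded non-negative self-adjoint operator on $\mathcal{H} \otimes \mathcal{H}$. Then for every $\epsilon > 0$, $$v \geq \mathcal{P}^{\otimes 2} v \mathcal{P}^{\otimes 2} + \mathcal{P}^{\otimes 2} v \mathcal{Q}^{\otimes 2} + \mathcal{Q}^{\otimes 2} v \mathcal{P}^{\otimes 2} + (1-\epsilon)(\mathcal{P}\otimes\mathcal{Q} + \mathcal{Q}\otimes\mathcal{P}) v (\mathcal{P}\otimes\mathcal{Q} + \mathcal{Q}\otimes\mathcal{P}) - \epsilon^{-1} \|v\| \, \mathcal{Q}^{\otimes 2},$$ provided the cross terms $(\mathcal{P}\otimes\mathcal{Q}+\mathcal{Q}\otimes\mathcal{P}) v \mathcal{P}^{\otimes 2}$ and its adjoint vanish. -/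
/-! Split `ψ = a + b + c` along `𝒫⊗², 𝒫⊗𝒬 + 𝒬⊗𝒫, 𝒬⊗²`. The `a`–`b` cross terms vanish by
hypothesis, the `b`–`c` cross terms are bounded below by `-ε⟪b, v b⟫ - ε⁻¹⟪c, v c⟫`
(positivity of `v` at `εb + c`), and `0 ≤ ⟪c, v c⟫ ≤ ‖v‖‖c‖²`. -/

open RCLike

section

variable {𝕜 E : Type*} [RCLike 𝕜] [NormedAddCommGroup E] [InnerProductSpace 𝕜 E]

local notation "⟪" x ", " y "⟫" => inner 𝕜 x y

-- Expand positivity of `T` at `ε • x + y` and divide by `ε`.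
theorem neg_re_inner_cross_le_of_accretive (T : E →ₗ[𝕜] E) (hT : ∀ x, 0 ≤ re ⟪x, T x⟫)
    {ε : ℝ} (hε : 0 < ε) (x y : E) :
    -(re ⟪x, T y⟫ + re ⟪y, T x⟫) ≤ ε * re ⟪x, T x⟫ + ε⁻¹ * re ⟪y, T y⟫ := by
  have hpos := hT ((ε : 𝕜) • x + y)
  simp only [map_add, map_smul, inner_add_left, inner_add_right, inner_smul_left,
    inner_smul_right, conj_ofReal, re_ofReal_mul] at hpos
  have hεinv : ε * ε⁻¹ = 1 := mul_inv_cancel₀ hε.ne'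
  nlinarith [hT y]

theorem re_inner_apply_self_le (T : E →L[𝕜] E) (x : E) : re ⟪x, T x⟫ ≤ ‖T‖ * ‖x‖ ^ 2 :=
  calc re ⟪x, T x⟫ ≤ ‖x‖ * ‖T x‖ := re_inner_le_norm _ _
    _ ≤ ‖x‖ * (‖T‖ * ‖x‖) := by gcongr; exact T.le_opNorm x
    _ = ‖T‖ * ‖x‖ ^ 2 := by ring

theorem inner_apply_eq_zero_of_comp_eq_zero [CompleteSpace E] {P R T : E →L[𝕜] E}
    (hP : IsSelfAdjoint P) (h : P ∘L T ∘L R = 0) (x y : E) : ⟪P x, T (R y)⟫ = 0 :=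
  calc ⟪P x, T (R y)⟫ = ⟪x, (P ∘L T ∘L R) y⟫ := hP.isSymmetric x _
    _ = 0 := by rw [h, zero_apply, inner_zero_right]

theorem sector_bound_of_inner_cross_eq_zero (T : E →L[𝕜] E) (hT : ∀ x, 0 ≤ re ⟪x, T x⟫)
    {ε : ℝ} (hε : 0 < ε) {a b c : E} (hab : ⟪a, T b⟫ = 0) (hba : ⟪b, T a⟫ = 0) :
    re ⟪a, T a⟫ + re ⟪a, T c⟫ + re ⟪c, T a⟫ + (1 - ε) * re ⟪b, T b⟫ - ε⁻¹ * ‖T‖ * ‖c‖ ^ 2 ≤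
      re ⟪a + b + c, T (a + b + c)⟫ := by
  have hbc := neg_re_inner_cross_le_of_accretive (T : E →ₗ[𝕜] E) hT hε b c
  have hcc := re_inner_apply_self_le T c
  have hεinv : 0 < ε⁻¹ := inv_pos.mpr hε
  simp only [ContinuousLinearMap.coe_coe] at hbc
  simp only [map_add, inner_add_left, inner_add_right, hab, hba, map_zero]
  nlinarith [hT c]

end

theorem two_body_sector_decomposition_bound_general
    {K : Type*} [NormedAddCommGroup K] [InnerProductSpace ℂ K] [CompleteSpace K]
    (v : K →L[ℂ] K)
    (hv_nn : ∀ ψ : K, 0 ≤ (inner ℂ ψ (v ψ) : ℂ).re)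
    (PP PQ QP QQ : K →L[ℂ] K)
    (hsa : IsSelfAdjoint PP ∧ IsSelfAdjoint PQ ∧ IsSelfAdjoint QP ∧ IsSelfAdjoint QQ)
    (hsum : PP + PQ + QP + QQ = 1)
    (hcross : (PQ + QP) ∘L v ∘L PP = 0 ∧ PP ∘L v ∘L (PQ + QP) = 0)
    (ε : ℝ) (hε : 0 < ε) (ψ : K) :
    (inner ℂ (PP ψ) (v (PP ψ)) : ℂ).re
      + (inner ℂ (PP ψ) (v (QQ ψ)) : ℂ).re + (inner ℂ (QQ ψ) (v (PP ψ)) : ℂ).re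
      + (1 - ε) * (inner ℂ ((PQ + QP) ψ) (v ((PQ + QP) ψ)) : ℂ).re
      - ε⁻¹ * ‖v‖ * ‖QQ ψ‖ ^ 2 ≤
    (inner ℂ ψ (v ψ) : ℂ).re := by
  have hψ : PP ψ + (PQ + QP) ψ + QQ ψ = ψ := by
    simpa only [add_apply, one_apply_eq_self, add_assoc] using congr($hsum ψ)
  have hab := inner_apply_eq_zero_of_comp_eq_zero hsa.1 hcross.2 ψ ψ
  have hba := inner_apply_eq_zero_of_comp_eq_zero (hsa.2.1.add hsa.2.2.1) hcross.1 ψ ψ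
  have key := sector_bound_of_inner_cross_eq_zero v hv_nn hε hab hba (c := QQ ψ)
  rwa [hψ] at key

/-- Splitting of a non-negative two-body interaction `v` on `ℋ ⊗ ℋ` along the sectors of
`1 = (𝒫+𝒬)⊗(𝒫+𝒬)`. The four sector projections `𝒫⊗𝒫, 𝒫⊗𝒬, 𝒬⊗𝒫, 𝒬⊗𝒬` are mutually
orthogonal projections summing to one. Provided the cross terms coupling `𝒫⊗𝒫` to the
one-`𝒬` sector vanish, for every `ε > 0`:
`v ≥ 𝒫⊗²v𝒫⊗² + 𝒫⊗²v𝒬⊗² + 𝒬⊗²v𝒫⊗² + (1-ε)(𝒫⊗𝒬+𝒬⊗𝒫)v(𝒫⊗𝒬+𝒬⊗𝒫) - ε⁻¹‖v‖𝒬⊗²`. -/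
theorem two_body_sector_decomposition_bound
    {K : Type*} [NormedAddCommGroup K] [InnerProductSpace ℂ K] [CompleteSpace K]
    (v : K →L[ℂ] K) (hv_sa : IsSelfAdjoint v)
    (hv_nn : ∀ ψ : K, 0 ≤ (inner ℂ ψ (v ψ) : ℂ).re)
    (PP PQ QP QQ : K →L[ℂ] K)
    (hsa : IsSelfAdjoint PP ∧ IsSelfAdjoint PQ ∧ IsSelfAdjoint QP ∧ IsSelfAdjoint QQ)
    (hidem : PP ∘L PP = PP ∧ PQ ∘L PQ = PQ ∧ QP ∘L QP = QP ∧ QQ ∘L QQ = QQ)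
    (horth : PP ∘L PQ = 0 ∧ PP ∘L QP = 0 ∧ PP ∘L QQ = 0 ∧
             PQ ∘L QP = 0 ∧ PQ ∘L QQ = 0 ∧ QP ∘L QQ = 0)
    (hsum : PP + PQ + QP + QQ = 1)
    (hcross : (PQ + QP) ∘L v ∘L PP = 0 ∧ PP ∘L v ∘L (PQ + QP) = 0)
    (ε : ℝ) (hε : 0 < ε) (ψ : K) :
    (inner ℂ (PP ψ) (v (PP ψ)) : ℂ).re
      + (inner ℂ (PP ψ) (v (QQ ψ)) : ℂ).re + (inner ℂ (QQ ψ) (v (PP ψ)) : ℂ).re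
      + (1 - ε) * (inner ℂ ((PQ + QP) ψ) (v ((PQ + QP) ψ)) : ℂ).re
      - ε⁻¹ * ‖v‖ * ‖QQ ψ‖ ^ 2 ≤
    (inner ℂ ψ (v ψ) : ℂ).re :=
  two_body_sector_decomposition_bound_general v hv_nn PP PQ QP QQ hsa hsum hcross ε hε ψ
end

section
/- Let $(a_p)$ satisfy the CCR with $N_+ = \sum_p a_p^\dagger a_p$, and let real coefficients $v_p = v_{-p} \geq 0$ satisfy $\frac{v_p^2}{p^2 + v_p} \leq \mu (p^2 + v_p)$ for all $p$ and some $0 < \mu < 1$. Then for every $\lambda > 0$, $$\frac{1}{2}\sum_{p} v_p (a_p^\dagger a_{-p}^\dagger + a_p a_{-p}) \geq -\left(\lambda + \frac{\mu}{4\lambda}\right) \sum_p (p^2 + v_p) a_p^\dagger a_p - \frac{1}{\lambda}\sum_p \frac{v_p^2}{p^2 + v_p}.$$ In particular, choosing $\lambda = \sqrt{\mu}/2$, the pairing term is bounded below by $-\sqrt{\mu}\, \mathbb{H}_0^{F} - C$ with $\sqrt{\mu} < 1$, where $\mathbb{H}_0^F = \sum_p (p^2+v_p) a_p^\dagger a_p$.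 -/
/-!
For each mode, Cauchy–Schwarz and AM-GM with weight `ε_p = λ (p² + v_p)` give
`-v_p Re ⟪a_p Φ, a_{-p}† Φ⟫ ≤ ε_p ‖a_p Φ‖² + v_p² / (4 ε_p) ‖a_{-p}† Φ‖²` (and likewise for the
`a_p a_{-p}` term), while the CCR turn `‖a† Φ‖²` into `‖a Φ‖² + ‖Φ‖²`. The hypothesis
`v_p² / (p² + v_p) ≤ μ (p² + v_p)` bounds the resulting coefficient `v_p² / (4 ε_p)` of `‖a Φ‖²`
by `μ / (4λ) (p² + v_p)`, and the symmetry `p ↔ -p` lets the bounds for `p` and `-p` be summed.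
-/

open scoped InnerProductSpace
open RCLike

theorem mul_mul_le_mul_sq_add_div_mul_sq (v s t : ℝ) {e : ℝ} (he : 0 < e) :
    v * (s * t) ≤ e * s ^ 2 + v ^ 2 / (4 * e) * t ^ 2 := by
  have hsq : 0 ≤ (2 * e * s - v * t) ^ 2 / (4 * e) := by positivity
  have hexp : (2 * e * s - v * t) ^ 2 / (4 * e) =
      e * s ^ 2 + v ^ 2 / (4 * e) * t ^ 2 - v * (s * t) := by
    field_simp
    ring
  linarith

theorem Function.Involutive.sum_add_comp {ι R : Type*} [Fintype ι] [NonAssocSemiring R]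
    {σ : ι → ι} (hσ : Function.Involutive σ) (f : ι → R) :
    ∑ i, (f i + f (σ i)) = 2 * ∑ i, f i := by
  rw [Finset.sum_add_distrib, hσ.bijective.sum_comp f, two_mul]

section CCR

variable {𝕜 V : Type*} [RCLike 𝕜] [NormedAddCommGroup V] [InnerProductSpace 𝕜 V]

theorem neg_norm_mul_norm_le_re_inner (x y : V) : -(‖x‖ * ‖y‖) ≤ re ⟪x, y⟫_𝕜 := by
  have := re_inner_le_norm (𝕜 := 𝕜) (-x) y
  rw [inner_neg_left, map_neg, norm_neg] at this
  linarith

theorem re_inner_sum_ofReal_smul_apply {ι : Type*} [Fintype ι] (r : ι → ℝ)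
    (T : ι → Module.End 𝕜 V) (x : V) :
    re ⟪x, (∑ i, (r i : 𝕜) • T i) x⟫_𝕜 = ∑ i, r i * re ⟪x, T i x⟫_𝕜 := by
  simp only [LinearMap.sum_apply, LinearMap.smul_apply, inner_sum, inner_smul_right, map_sum,
    re_ofReal_mul]

theorem inner_apply_eq_inner_apply_of_adjoint {a ad : Module.End 𝕜 V}
    (hadj : ∀ x y, ⟪ad x, y⟫_𝕜 = ⟪x, a y⟫_𝕜) (x y : V) : ⟪x, ad y⟫_𝕜 = ⟪a x, y⟫_𝕜 := by
  rw [← inner_conj_symm, hadj, inner_conj_symm]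

theorem norm_sq_apply_eq_of_commutator_eq_one {a ad : Module.End 𝕜 V}
    (hadj : ∀ x y, ⟪ad x, y⟫_𝕜 = ⟪x, a y⟫_𝕜) (hccr : a * ad - ad * a = 1) (x : V) :
    ‖ad x‖ ^ 2 = ‖a x‖ ^ 2 + ‖x‖ ^ 2 := by
  have hcomm : a (ad x) = ad (a x) + x := by
    have := congrArg (· x) hccr
    simp only [LinearMap.sub_apply, Module.End.mul_apply, Module.End.one_apply] at this
    exact sub_eq_iff_eq_add'.mp this
  have hinner : ⟪ad x, ad x⟫_𝕜 = ⟪a x, a x⟫_𝕜 + ⟪x, x⟫_𝕜 := by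
    rw [hadj, hcomm, inner_add_right, inner_apply_eq_inner_apply_of_adjoint hadj]
  simpa only [← inner_self_eq_norm_sq (𝕜 := 𝕜), map_add] using congrArg re hinner

variable {a₁ ad₁ a₂ ad₂ : Module.End 𝕜 V}
  (hadj₁ : ∀ x y, ⟪ad₁ x, y⟫_𝕜 = ⟪x, a₁ y⟫_𝕜) (hccr₁ : a₁ * ad₁ - ad₁ * a₁ = 1)
  (hadj₂ : ∀ x y, ⟪ad₂ x, y⟫_𝕜 = ⟪x, a₂ y⟫_𝕜) (hccr₂ : a₂ * ad₂ - ad₂ * a₂ = 1)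
include hadj₁ hccr₁ hadj₂ hccr₂

theorem neg_mul_re_inner_pairing_le {v e : ℝ} (hv : 0 ≤ v) (he : 0 < e) (x : V) :
    -(v * re ⟪x, (ad₁ * ad₂ + a₁ * a₂) x⟫_𝕜) ≤
      (e + v ^ 2 / (4 * e)) * (‖a₁ x‖ ^ 2 + ‖a₂ x‖ ^ 2) + 2 * (v ^ 2 / (4 * e)) * ‖x‖ ^ 2 := by
  have hcre : -(‖a₁ x‖ * ‖ad₂ x‖) ≤ re ⟪x, ad₁ (ad₂ x)⟫_𝕜 := by
    rw [inner_apply_eq_inner_apply_of_adjoint hadj₁]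
    exact neg_norm_mul_norm_le_re_inner _ _
  have hann : -(‖ad₁ x‖ * ‖a₂ x‖) ≤ re ⟪x, a₁ (a₂ x)⟫_𝕜 := by
    rw [← hadj₁]
    exact neg_norm_mul_norm_le_re_inner _ _
  have hcre_amgm := mul_mul_le_mul_sq_add_div_mul_sq v ‖a₁ x‖ ‖ad₂ x‖ he
  have hann_amgm := mul_mul_le_mul_sq_add_div_mul_sq v ‖a₂ x‖ ‖ad₁ x‖ he
  rw [norm_sq_apply_eq_of_commutator_eq_one hadj₂ hccr₂] at hcre_amgm
  rw [norm_sq_apply_eq_of_commutator_eq_one hadj₁ hccr₁] at hann_amgm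
  rw [LinearMap.add_apply, Module.End.mul_apply, Module.End.mul_apply, inner_add_right, map_add]
  linarith [mul_le_mul_of_nonneg_left hcre hv, mul_le_mul_of_nonneg_left hann hv]

theorem neg_mul_re_inner_pairing_le_of_sq_div_le {v w μ l : ℝ} (hv : 0 ≤ v) (hw : 0 < w)
    (hl : 0 < l) (hvw : v ^ 2 / w ≤ μ * w) (x : V) :
    -(v * re ⟪x, (ad₁ * ad₂ + a₁ * a₂) x⟫_𝕜) ≤
      ((l + μ / (4 * l)) * (w * ‖a₁ x‖ ^ 2) + 1 / l * (v ^ 2 / w) * ‖x‖ ^ 2) +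
        ((l + μ / (4 * l)) * (w * ‖a₂ x‖ ^ 2) + 1 / l * (v ^ 2 / w) * ‖x‖ ^ 2) := by
  have hc : v ^ 2 / (4 * (l * w)) = v ^ 2 / w / (4 * l) := by
    field_simp
  have hc_le : v ^ 2 / (4 * (l * w)) ≤ μ / (4 * l) * w := by
    rw [hc, div_mul_eq_mul_div, div_le_div_iff_of_pos_right (by positivity)]
    exact hvw
  have hc_le' : v ^ 2 / (4 * (l * w)) ≤ 1 / l * (v ^ 2 / w) := by
    rw [hc, one_div_mul_eq_div]
    exact div_le_div_of_nonneg_left (div_nonneg (sq_nonneg _) hw.le) hl (by linarith)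
  refine (neg_mul_re_inner_pairing_le hadj₁ hccr₁ hadj₂ hccr₂ hv (mul_pos hl hw) x).trans ?_
  nlinarith [sq_nonneg ‖a₁ x‖, sq_nonneg ‖a₂ x‖, sq_nonneg ‖x‖]

end CCR

theorem pairing_term_lower_bound_general
    {V : Type*} [NormedAddCommGroup V] [InnerProductSpace ℂ V]
    {ι : Type*} [Fintype ι] [DecidableEq ι] (neg : ι → ι) (hneg : ∀ p, neg (neg p) = p)
    (a ad : ι → Module.End ℂ V)
    (hadj : ∀ p (x y : V), (inner ℂ (ad p x) y : ℂ) = inner ℂ x (a p y))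
    (hccr : ∀ p q, a p * ad q - ad q * a p = if p = q then 1 else 0)
    (psq : ι → ℝ) (hpsq : ∀ p, 0 < psq p) (hpsq_sym : ∀ p, psq (neg p) = psq p)
    (v : ι → ℝ) (hv_nn : ∀ p, 0 ≤ v p) (hv_sym : ∀ p, v (neg p) = v p)
    (μ : ℝ)
    (hkey : ∀ p, (v p) ^ 2 / (psq p + v p) ≤ μ * (psq p + v p))
    (l : ℝ) (hl : 0 < l) (Φ : V) :
    -((l + μ / (4 * l)) * ∑ p : ι, (psq p + v p) * ‖a p Φ‖ ^ 2)
        - (1 / l) * (∑ p : ι, (v p) ^ 2 / (psq p + v p)) * ‖Φ‖ ^ 2 ≤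
      (inner ℂ Φ ((((1 : ℂ) / 2) •
        ∑ p : ι, (v p : ℂ) • (ad p * ad (neg p) + a p * a (neg p))) Φ) : ℂ).re := by
  set F : ι → ℝ := fun p => (l + μ / (4 * l)) * ((psq p + v p) * ‖a p Φ‖ ^ 2)
    + 1 / l * (v p ^ 2 / (psq p + v p)) * ‖Φ‖ ^ 2 with hF
  have hmode (p : ι) : -(v p * re ⟪Φ, (ad p * ad (neg p) + a p * a (neg p)) Φ⟫_ℂ) ≤
      F p + F (neg p) := by
    simpa only [hF, hpsq_sym, hv_sym] using neg_mul_re_inner_pairing_le_of_sq_div_le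
      (hadj p) (by simpa using hccr p p) (hadj (neg p)) (by simpa using hccr (neg p) (neg p))
      (hv_nn p) (add_pos_of_pos_of_nonneg (hpsq p) (hv_nn p)) hl (hkey p) Φ
  have hpairing : (inner ℂ Φ ((((1 : ℂ) / 2) •
        ∑ p : ι, (v p : ℂ) • (ad p * ad (neg p) + a p * a (neg p))) Φ) : ℂ).re =
      1 / 2 * ∑ p, v p * re ⟪Φ, (ad p * ad (neg p) + a p * a (neg p)) Φ⟫_ℂ := by
    rw [LinearMap.smul_apply, inner_smul_right, ← re_inner_sum_ofReal_smul_apply,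
      show (1 : ℂ) / 2 = ((1 / 2 : ℝ) : ℂ) by push_cast; rfl, Complex.re_ofReal_mul]
    rfl
  have hbound : -((l + μ / (4 * l)) * ∑ p : ι, (psq p + v p) * ‖a p Φ‖ ^ 2)
        - (1 / l) * (∑ p : ι, (v p) ^ 2 / (psq p + v p)) * ‖Φ‖ ^ 2 = -∑ p, F p := by
    simp only [hF, Finset.sum_add_distrib, Finset.mul_sum, Finset.sum_mul]
    ring
  have hmodes := Finset.sum_le_sum fun p (_ : p ∈ Finset.univ) => hmode p
  rw [Finset.sum_neg_distrib, Function.Involutive.sum_add_comp hneg F] at hmodes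
  rw [hpairing, hbound]
  linarith

/-- Lower bound on the Bogoliubov pairing term: if `v_p = v_{-p} ≥ 0` satisfy
`v_p²/(p²+v_p) ≤ μ(p²+v_p)` for some `0 < μ < 1`, then for every `λ > 0`,
`½ ∑_p v_p (a_p† a_{-p}† + a_p a_{-p})
  ≥ -(λ + μ/(4λ)) ∑_p (p²+v_p) a_p† a_p - λ⁻¹ ∑_p v_p²/(p²+v_p)`
as quadratic forms. -/
theorem pairing_term_lower_bound
    {V : Type*} [NormedAddCommGroup V] [InnerProductSpace ℂ V]
    {ι : Type*} [Fintype ι] [DecidableEq ι] (neg : ι → ι) (hneg : ∀ p, neg (neg p) = p)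
    (a ad : ι → Module.End ℂ V)
    (hadj : ∀ p (x y : V), (inner ℂ (ad p x) y : ℂ) = inner ℂ x (a p y))
    (hccr : ∀ p q, a p * ad q - ad q * a p = if p = q then 1 else 0)
    (hcomm_a : ∀ p q, a p * a q = a q * a p)
    (psq : ι → ℝ) (hpsq : ∀ p, 0 < psq p) (hpsq_sym : ∀ p, psq (neg p) = psq p)
    (v : ι → ℝ) (hv_nn : ∀ p, 0 ≤ v p) (hv_sym : ∀ p, v (neg p) = v p)
    (μ : ℝ) (hμ0 : 0 < μ) (hμ1 : μ < 1)
    (hkey : ∀ p, (v p) ^ 2 / (psq p + v p) ≤ μ * (psq p + v p))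
    (l : ℝ) (hl : 0 < l) (Φ : V) :
    -((l + μ / (4 * l)) * ∑ p : ι, (psq p + v p) * ‖a p Φ‖ ^ 2)
        - (1 / l) * (∑ p : ι, (v p) ^ 2 / (psq p + v p)) * ‖Φ‖ ^ 2 ≤
      (inner ℂ Φ ((((1 : ℂ) / 2) •
        ∑ p : ι, (v p : ℂ) • (ad p * ad (neg p) + a p * a (neg p))) Φ) : ℂ).re :=
  pairing_term_lower_bound_general neg hneg a ad hadj hccr psq hpsq hpsq_sym v hv_nn hv_sym μ hkey l
    hl Φ
end

section
/- Let $U: \mathcal{H}_N \to \mathcal{F}_+^{\leq N}$ be the unitary excitation map defined by $U\Psi = \bigoplus_{j=0}^{N} \mathcal{Q}^{\otimes_s j}\left( \frac{a_0^{N-j}}{\sqrt{(N-j)!}} \Psi \right)$, where $a_0$ annihilates the condensate mode $v_0$ and $\mathcal{Q}$ projects onto $\{v_0\}^\perp$. Then for every $k \neq 0$, $U^{\dagger} a_k^{\dagger} a_0 U = a_k^{\dagger} \sqrt{N - N_+}$ as operators on $\mathcal{F}_+^{\leq N}$, where $N_+$ is the number operator on $\mathcal{F}_+^{\leq N}$.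 -/
/-!
Split `Ψ` into its `N₊`-eigencomponents `c j`. Since `N₊` commutes with `a₀†a₀` and
`a₀†a₀ + N₊ = N` on `Ψ`, each `c j` is an `a₀†a₀`-eigenvector with eigenvalue `N - j`.
On an `a₀†a₀`-eigenvector `v` with eigenvalue `n`, the projection `Π` kills `a₀^m v` unless
`m = n`, so `U v = (n!)^{-1/2} a₀^n v`; the CCR then give `‖a₀^n v‖² = n! ‖v‖²` and
`U (a₀ v) = √n U v`. Isometry follows from orthogonality of the `N₊`-eigenspaces, and the
intertwining relation from `U` commuting with `a_k†`.
-/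

open Finset

theorem eq_zero_of_sum_eigenvectors_eq_zero {K M : Type*} [Field K] [CharZero K]
    [AddCommGroup M] [Module K M] (T : Module.End K M) (s : Finset ℕ) (w : ℕ → M)
    (hw : ∀ j ∈ s, T (w j) = (j : K) • w j) (hsum : ∑ j ∈ s, w j = 0) :
    ∀ j ∈ s, w j = 0 :=
  (iSupIndep_iff_finsetSum_eq_zero_imp_eq_zero _).1
    (T.eigenspaces_iSupIndep.comp Nat.cast_injective) s w
    (fun j hj => Module.End.mem_eigenspace_iff.2 (hw j hj)) hsum

theorem Commute.apply_eq_sub_smul_of_add_apply_eq_smul {K M : Type*} [Field K] [CharZero K]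
    [AddCommGroup M] [Module K M] {A B : Module.End K M} (hAB : Commute A B) (N : K)
    (s : Finset ℕ) (c : ℕ → M) (hc : ∀ j, B (c j) = (j : K) • c j)
    (hsum : (A + B) (∑ j ∈ s, c j) = N • ∑ j ∈ s, c j) :
    ∀ j ∈ s, A (c j) = (N - j) • c j := by
  have hB : ∀ j ∈ s,
      B (A (c j) - (N - j) • c j) = (j : K) • (A (c j) - (N - j) • c j) := by
    intro j _
    rw [map_sub, map_smul, ← Module.End.mul_apply, ← hAB.eq, Module.End.mul_apply, hc,
      map_smul, smul_sub, smul_comm (j : K)]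
  have hsum_sub : ∑ j ∈ s, (A (c j) - (N - j) • c j) = 0 := by
    calc ∑ j ∈ s, (A (c j) - (N - j) • c j)
        = (A + B) (∑ j ∈ s, c j) - N • ∑ j ∈ s, c j := by
          simp only [LinearMap.add_apply, map_sum, hc, sub_smul, sum_sub_distrib,
            sum_add_distrib, smul_sum]
          abel
      _ = 0 := by rw [hsum, sub_self]
  exact fun j hj => sub_eq_zero.1 (eq_zero_of_sum_eigenvectors_eq_zero B s _ hB hsum_sub j hj)

theorem commute_sum_mul {R ι : Type*} [Semiring R] [Fintype ι] {a ad : ι → R} {X : R}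
    (ha : ∀ p, Commute X (a p)) (had : ∀ p, Commute X (ad p)) :
    Commute (∑ p, ad p * a p) X :=
  Commute.sum_left _ _ _ fun p _ => (had p).symm.mul_left (ha p).symm

section InnerProductSpace

variable {V : Type*} [NormedAddCommGroup V] [InnerProductSpace ℂ V]

theorem LinearMap.IsSymmetric.norm_sq_sum_eigenvectors {T : Module.End ℂ V}
    (hT : T.IsSymmetric) (s : Finset ℕ) (w : ℕ → V)
    (hw : ∀ j ∈ s, T (w j) = (j : ℂ) • w j) :
    ‖∑ j ∈ s, w j‖ ^ 2 = ∑ j ∈ s, ‖w j‖ ^ 2 := by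
  classical
  let l : ∀ j : ℕ, Module.End.eigenspace T (j : ℂ) := fun j =>
    if h : j ∈ s then ⟨w j, Module.End.mem_eigenspace_iff.2 (hw j h)⟩ else 0
  have hl : ∀ j ∈ s, (l j : V) = w j := fun j hj => by simp [l, hj]
  calc ‖∑ j ∈ s, w j‖ ^ 2 = ‖∑ j ∈ s, (l j : V)‖ ^ 2 := by rw [sum_congr rfl hl]
    _ = ∑ j ∈ s, ‖l j‖ ^ 2 :=
      (hT.orthogonalFamily_eigenspaces.comp Nat.cast_injective).norm_sum l s
    _ = ∑ j ∈ s, ‖w j‖ ^ 2 :=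
      sum_congr rfl fun j hj => by rw [← hl j hj, Submodule.coe_norm]

theorem isSymmetric_sum_mul_of_adjoint {ι : Type*} [Fintype ι] (a ad : ι → Module.End ℂ V)
    (hadj : ∀ p (x y : V), inner ℂ (ad p x) y = inner ℂ x (a p y)) :
    (∑ p, ad p * a p).IsSymmetric := by
  intro x y
  simp only [LinearMap.coe_sum, Finset.sum_apply, Module.End.mul_apply, sum_inner, inner_sum]
  refine sum_congr rfl fun p _ => ?_
  rw [hadj, ← inner_conj_symm x, hadj, inner_conj_symm]

variable {P a0 a0d : Module.End ℂ V}

theorem number_apply_lower_of_ccr (hccr : a0 * a0d - a0d * a0 = 1) {v : V} {μ : ℂ}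
    (hv : a0d (a0 v) = μ • v) : a0d (a0 (a0 v)) = (μ - 1) • a0 v := by
  have h := congrArg (fun T : Module.End ℂ V => T (a0 v)) hccr
  simp only [LinearMap.sub_apply, Module.End.mul_apply, Module.End.one_apply, hv,
    map_smul] at h
  linear_combination (norm := module) -h

theorem number_apply_lower_of_ccr_succ (hccr : a0 * a0d - a0d * a0 = 1) {v : V} {n : ℕ}
    (hv : a0d (a0 v) = ((n + 1 : ℕ) : ℂ) • v) : a0d (a0 (a0 v)) = (n : ℂ) • a0 v := by
  rw [number_apply_lower_of_ccr hccr hv]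
  push_cast
  ring_nf

theorem norm_sq_lower_of_adjoint (hadj : ∀ x y : V, inner ℂ (a0d x) y = inner ℂ x (a0 y))
    {v : V} {μ : ℝ} (hv : a0d (a0 v) = (μ : ℂ) • v) :
    ‖a0 v‖ ^ 2 = μ * ‖v‖ ^ 2 := by
  have h := hadj (a0 v) v
  rw [hv, inner_smul_left, Complex.conj_ofReal, inner_self_eq_norm_sq_to_K,
    inner_self_eq_norm_sq_to_K] at h
  exact Complex.ofReal_injective (by push_cast; exact h.symm)

theorem lower_eq_zero_of_number_eq_zero
    (hadj : ∀ x y : V, inner ℂ (a0d x) y = inner ℂ x (a0 y)) {v : V} (hv : a0d (a0 v) = 0) :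
    a0 v = 0 := by
  simpa using norm_sq_lower_of_adjoint hadj (μ := 0) (by simpa using hv)

theorem norm_sq_lower_pow (hadj : ∀ x y : V, inner ℂ (a0d x) y = inner ℂ x (a0 y))
    (hccr : a0 * a0d - a0d * a0 = 1) (n : ℕ) {v : V} (hv : a0d (a0 v) = (n : ℂ) • v) :
    ‖(a0 ^ n) v‖ ^ 2 = n.factorial * ‖v‖ ^ 2 := by
  induction n generalizing v with
  | zero => simp
  | succ n ih =>
    rw [pow_succ a0, Module.End.mul_apply, ih (number_apply_lower_of_ccr_succ hccr hv),
      norm_sq_lower_of_adjoint hadj (μ := n + 1) (by exact_mod_cast hv), Nat.factorial_succ]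
    push_cast
    ring

theorem proj_lower_pow_of_number_eq
    (hadj : ∀ x y : V, inner ℂ (a0d x) y = inner ℂ x (a0 y))
    (hccr : a0 * a0d - a0d * a0 = 1) (hP_raise : P * a0d = 0)
    (hP_vacuum : ∀ v, a0 v = 0 → P v = v) (n : ℕ) {v : V} (hv : a0d (a0 v) = (n : ℂ) • v)
    (m : ℕ) : P ((a0 ^ m) v) = if m = n then (a0 ^ n) v else 0 := by
  induction n generalizing v m with
  | zero =>
    have hv0 : a0 v = 0 := lower_eq_zero_of_number_eq_zero hadj (by simpa using hv)
    cases m with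
    | zero => simpa using hP_vacuum v hv0
    | succ m => simp [pow_succ a0, hv0]
  | succ n ih =>
    cases m with
    | zero =>
      have hv_raise : v = ((n + 1 : ℕ) : ℂ)⁻¹ • a0d (a0 v) := by
        rw [hv, inv_smul_smul₀ (Nat.cast_ne_zero.2 n.succ_ne_zero)]
      have hP_raise_apply : P (a0d (a0 v)) = 0 := by
        rw [← Module.End.mul_apply, hP_raise, LinearMap.zero_apply]
      rw [pow_zero, Module.End.one_apply, hv_raise, map_smul, hP_raise_apply, smul_zero,
        if_neg n.succ_ne_zero.symm]
    | succ m =>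
      rw [pow_succ a0, Module.End.mul_apply, ih (number_apply_lower_of_ccr_succ hccr hv) m,
        pow_succ a0, Module.End.mul_apply]
      simp only [add_left_inj]

noncomputable def excitationMap (P a0 : Module.End ℂ V) (N : ℕ) : Module.End ℂ V :=
  ∑ m ∈ range (N + 1), (((Real.sqrt (Nat.factorial m))⁻¹ : ℝ) : ℂ) • (P * a0 ^ m)

theorem excitationMap_commute {X : Module.End ℂ V} (hP : Commute P X) (ha0 : Commute a0 X)
    (N : ℕ) : Commute (excitationMap P a0 N) X :=
  Commute.sum_left _ _ _ fun m _ => (hP.mul_left (ha0.pow_left m)).smul_left _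

theorem excitationMap_apply_of_number_eq
    (hadj : ∀ x y : V, inner ℂ (a0d x) y = inner ℂ x (a0 y))
    (hccr : a0 * a0d - a0d * a0 = 1) (hP_raise : P * a0d = 0)
    (hP_vacuum : ∀ v, a0 v = 0 → P v = v) {N n : ℕ} (hn : n ≤ N) {v : V}
    (hv : a0d (a0 v) = (n : ℂ) • v) :
    excitationMap P a0 N v = (((Real.sqrt (Nat.factorial n))⁻¹ : ℝ) : ℂ) • (a0 ^ n) v := by
  simp only [excitationMap, LinearMap.coe_sum, Finset.sum_apply, LinearMap.smul_apply,
    Module.End.mul_apply, proj_lower_pow_of_number_eq hadj hccr hP_raise hP_vacuum n hv,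
    smul_ite, smul_zero, sum_ite_eq', mem_range]
  rw [if_pos (Nat.lt_succ_of_le hn)]

theorem norm_excitationMap_of_number_eq
    (hadj : ∀ x y : V, inner ℂ (a0d x) y = inner ℂ x (a0 y))
    (hccr : a0 * a0d - a0d * a0 = 1) (hP_raise : P * a0d = 0)
    (hP_vacuum : ∀ v, a0 v = 0 → P v = v) {N n : ℕ} (hn : n ≤ N) {v : V}
    (hv : a0d (a0 v) = (n : ℂ) • v) :
    ‖excitationMap P a0 N v‖ = ‖v‖ := by
  have hfac : (0 : ℝ) < n.factorial := mod_cast n.factorial_pos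
  rw [excitationMap_apply_of_number_eq hadj hccr hP_raise hP_vacuum hn hv, norm_smul,
    Complex.norm_real, Real.norm_eq_abs, abs_inv, abs_of_pos (Real.sqrt_pos.2 hfac),
    ← Real.sqrt_sq (norm_nonneg ((a0 ^ n) v)), norm_sq_lower_pow hadj hccr n hv,
    Real.sqrt_mul hfac.le, Real.sqrt_sq (norm_nonneg v), inv_mul_cancel_left₀ (by positivity)]

theorem excitationMap_lower_of_number_eq
    (hadj : ∀ x y : V, inner ℂ (a0d x) y = inner ℂ x (a0 y))
    (hccr : a0 * a0d - a0d * a0 = 1) (hP_raise : P * a0d = 0)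
    (hP_vacuum : ∀ v, a0 v = 0 → P v = v) {N n : ℕ} (hn : n ≤ N) {v : V}
    (hv : a0d (a0 v) = (n : ℂ) • v) :
    excitationMap P a0 N (a0 v) = ((Real.sqrt n : ℝ) : ℂ) • excitationMap P a0 N v := by
  cases n with
  | zero => simp [lower_eq_zero_of_number_eq_zero hadj (by simpa using hv)]
  | succ n =>
    have hfac : (0 : ℝ) < n.factorial := mod_cast n.factorial_pos
    rw [excitationMap_apply_of_number_eq hadj hccr hP_raise hP_vacuum (by omega)
        (number_apply_lower_of_ccr_succ hccr hv),
      excitationMap_apply_of_number_eq hadj hccr hP_raise hP_vacuum hn hv, smul_smul,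
      pow_succ a0, Module.End.mul_apply, ← Complex.ofReal_mul, Nat.factorial_succ,
      Nat.cast_mul, Real.sqrt_mul (by positivity), mul_inv, ← mul_assoc,
      mul_inv_cancel₀ (by positivity), one_mul]

end InnerProductSpace

theorem lnss_intertwining_general
    {V : Type*} [NormedAddCommGroup V] [InnerProductSpace ℂ V]
    {ι : Type*} [Fintype ι]
    (a0 a0d : Module.End ℂ V) (a ad : ι → Module.End ℂ V)
    (hadj0 : ∀ x y : V, (inner ℂ (a0d x) y : ℂ) = inner ℂ x (a0 y))
    (hadj : ∀ p (x y : V), (inner ℂ (ad p x) y : ℂ) = inner ℂ x (a p y))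
    (hccr0 : a0 * a0d - a0d * a0 = 1)
    (hcomm0a : ∀ p, a0 * a p = a p * a0) (hcomm0ad : ∀ p, a0 * ad p = ad p * a0)
    (hcomm0da : ∀ p, a0d * a p = a p * a0d) (hcomm0dad : ∀ p, a0d * ad p = ad p * a0d)
    (Pi0 : Module.End ℂ V)
    (hPi_kills : Pi0 * a0d = 0)
    (hPi_id : ∀ Ψ : V, a0 Ψ = 0 → Pi0 Ψ = Ψ)
    (hPi_comm_ad : ∀ p, Pi0 * ad p = ad p * Pi0)
    (N : ℕ) (k : ι)
    (S : Module.End ℂ V)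
    (hS : ∀ (Ψ : V) (m : ℕ), (∑ p : ι, ad p * a p) Ψ = (m : ℂ) • Ψ →
      S Ψ = ((Real.sqrt ((N : ℝ) - m)) : ℂ) • Ψ)
    (hgrade : ∀ Ψ : V, (a0d * a0 + ∑ p : ι, ad p * a p) Ψ = (N : ℂ) • Ψ →
      ∃ c : ℕ → V, (∀ j, (∑ p : ι, ad p * a p) (c j) = (j : ℂ) • c j) ∧
        Ψ = ∑ j ∈ Finset.range (N + 1), c j) :
    letI U : Module.End ℂ V :=
      ∑ m ∈ Finset.range (N + 1),
        (((Real.sqrt (Nat.factorial m))⁻¹ : ℝ) : ℂ) • (Pi0 * a0 ^ m)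
    ∀ Ψ : V, (a0d * a0 + ∑ p : ι, ad p * a p) Ψ = (N : ℂ) • Ψ →
      ‖U Ψ‖ = ‖Ψ‖ ∧ U ((ad k * a0) Ψ) = ad k (S (U Ψ)) := by
  intro Ψ hΨ
  change ‖excitationMap Pi0 a0 N Ψ‖ = ‖Ψ‖ ∧
    excitationMap Pi0 a0 N (ad k (a0 Ψ)) = ad k (S (excitationMap Pi0 a0 N Ψ))
  set U := excitationMap Pi0 a0 N
  set Np := ∑ p : ι, ad p * a p
  have hNp_symm : Np.IsSymmetric := isSymmetric_sum_mul_of_adjoint a ad hadj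
  have hNp_a0 : Commute Np a0 := commute_sum_mul hcomm0a hcomm0ad
  have hNp_a0d : Commute Np a0d := commute_sum_mul hcomm0da hcomm0dad
  obtain ⟨c, hc, rfl⟩ := hgrade Ψ hΨ
  have hnum : ∀ j ∈ range (N + 1), a0d (a0 (c j)) = ((N - j : ℕ) : ℂ) • c j := by
    intro j hj
    rw [Nat.cast_sub (mem_range_succ_iff.1 hj)]
    exact (hNp_a0d.mul_right hNp_a0).symm.apply_eq_sub_smul_of_add_apply_eq_smul _ _ c hc hΨ j hj
  have hUc : ∀ j ∈ range (N + 1),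
      U (c j) = (((Real.sqrt (Nat.factorial (N - j)))⁻¹ : ℝ) : ℂ) • (a0 ^ (N - j)) (c j) :=
    fun j hj => excitationMap_apply_of_number_eq hadj0 hccr0 hPi_kills hPi_id
      (Nat.sub_le N j) (hnum j hj)
  have hUc_eigen : ∀ j ∈ range (N + 1), Np (U (c j)) = (j : ℂ) • U (c j) := by
    intro j hj
    rw [hUc j hj, map_smul, ← Module.End.mul_apply, (hNp_a0.pow_right _).eq,
      Module.End.mul_apply, hc, map_smul, smul_comm]
  constructor
  · refine (sq_eq_sq₀ (norm_nonneg _) (norm_nonneg _)).1 ?_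
    rw [map_sum, hNp_symm.norm_sq_sum_eigenvectors _ _ hUc_eigen,
      hNp_symm.norm_sq_sum_eigenvectors _ _ fun j _ => hc j]
    exact sum_congr rfl fun j hj => by
      rw [norm_excitationMap_of_number_eq hadj0 hccr0 hPi_kills hPi_id (Nat.sub_le N j)
        (hnum j hj)]
  · rw [← Module.End.mul_apply U (ad k),
      (excitationMap_commute (hPi_comm_ad k) (hcomm0ad k) N).eq, Module.End.mul_apply]
    congr 1
    simp only [map_sum]
    refine sum_congr rfl fun j hj => ?_
    rw [excitationMap_lower_of_number_eq hadj0 hccr0 hPi_kills hPi_id (Nat.sub_le N j)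
        (hnum j hj), hS _ j (hUc_eigen j hj), Nat.cast_sub (mem_range_succ_iff.1 hj)]

/-- The LNSS excitation map `UΨ = ⊕_j 𝒬^{⊗j}(a₀^{N-j}/√((N-j)!) Ψ)` intertwines
`a_k† a₀` with `a_k† √(N-N₊)`: `U a_k† a₀ U† = a_k† √(N-N₊)` on `ℱ₊^{≤N}`.
Here the Fock space is abstracted as an inner product space `V` carrying a CCR
representation with condensate mode operators `a₀, a₀†`, excitation mode operators
`a_p, a_p†` (`p ∈ ι`, `0 ∉ ι`), `Π` the projection onto the mode-`0` vacuum sector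
(so that `U = ∑_m (m!)^{-1/2} Π a₀^m` on the `N`-particle sector), `N₊ = ∑_p a_p† a_p`
the excitation number operator and `S = √(N-N₊)` defined spectrally. On the
`N`-particle sector, `U` is isometric and `U (a_k† a₀ Ψ) = a_k† (S (U Ψ))`. -/
theorem lnss_intertwining
    {V : Type*} [NormedAddCommGroup V] [InnerProductSpace ℂ V]
    {ι : Type*} [Fintype ι] [DecidableEq ι]
    (a0 a0d : Module.End ℂ V) (a ad : ι → Module.End ℂ V)
    (hadj0 : ∀ x y : V, (inner ℂ (a0d x) y : ℂ) = inner ℂ x (a0 y))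
    (hadj : ∀ p (x y : V), (inner ℂ (ad p x) y : ℂ) = inner ℂ x (a p y))
    (hccr0 : a0 * a0d - a0d * a0 = 1)
    (hccr : ∀ p q, a p * ad q - ad q * a p = if p = q then 1 else 0)
    (hcomm0a : ∀ p, a0 * a p = a p * a0) (hcomm0ad : ∀ p, a0 * ad p = ad p * a0)
    (hcomm0da : ∀ p, a0d * a p = a p * a0d) (hcomm0dad : ∀ p, a0d * ad p = ad p * a0d)
    (hcomm_a : ∀ p q, a p * a q = a q * a p)
    (hcomm_ad : ∀ p q, ad p * ad q = ad q * ad p)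
    (Pi0 : Module.End ℂ V)
    (hPi_adj : ∀ x y : V, (inner ℂ (Pi0 x) y : ℂ) = inner ℂ x (Pi0 y))
    (hPi_idem : Pi0 * Pi0 = Pi0)
    (hPi_kills : Pi0 * a0d = 0) (hPi_range : a0 * Pi0 = 0)
    (hPi_id : ∀ Ψ : V, a0 Ψ = 0 → Pi0 Ψ = Ψ)
    (hPi_comm_a : ∀ p, Pi0 * a p = a p * Pi0)
    (hPi_comm_ad : ∀ p, Pi0 * ad p = ad p * Pi0)
    (N : ℕ) (k : ι)
    (S : Module.End ℂ V)
    (hS : ∀ (Ψ : V) (m : ℕ), (∑ p : ι, ad p * a p) Ψ = (m : ℂ) • Ψ →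
      S Ψ = ((Real.sqrt ((N : ℝ) - m)) : ℂ) • Ψ)
    (hgrade : ∀ Ψ : V, (a0d * a0 + ∑ p : ι, ad p * a p) Ψ = (N : ℂ) • Ψ →
      ∃ c : ℕ → V, (∀ j, (∑ p : ι, ad p * a p) (c j) = (j : ℂ) • c j) ∧
        Ψ = ∑ j ∈ Finset.range (N + 1), c j) :
    letI U : Module.End ℂ V :=
      ∑ m ∈ Finset.range (N + 1),
        (((Real.sqrt (Nat.factorial m))⁻¹ : ℝ) : ℂ) • (Pi0 * a0 ^ m)
    ∀ Ψ : V, (a0d * a0 + ∑ p : ι, ad p * a p) Ψ = (N : ℂ) • Ψ →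
      ‖U Ψ‖ = ‖Ψ‖ ∧ U ((ad k * a0) Ψ) = ad k (S (U Ψ)) :=
  lnss_intertwining_general a0 a0d a ad hadj0 hadj hccr0 hcomm0a hcomm0ad hcomm0da hcomm0dad Pi0
    hPi_kills hPi_id hPi_comm_ad N k S hS hgrade
end
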